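/- Suppose reals D > 0 and x₀, x₁ satisfy: x₀ minimizes |D - 2x| over a set containing 0 and x₀, x₁ minimizes |D - 2x₀ - 2x| over a set containing 0 and x₁, with D - 2x₀ ≥ 0 and D - 2x₀ - 2x₁ ≥ 0. Then |x₁| ≤ |x₀|. -/

import Mathlib

theorem stmt5_general (D x₀ x₁ : ℝ)
    (h₀l : 0 ≤ x₀)
    (h₁l : 0 ≤ x₁)
    (hnn₁ : 0 ≤ D - 2 * x₀ - 2 * x₁)
    (hpref : |D - 2 * x₀| ≤ |D - 2 * x₁|) :
    |x₁| ≤ |x₀| := by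
  have hD₁ : 0 ≤ D - 2 * x₁ := by linarith
  have hcmp : D - 2 * x₀ ≤ D - 2 * x₁ :=
    calc D - 2 * x₀ ≤ |D - 2 * x₀| := le_abs_self _
      _ ≤ |D - 2 * x₁| := hpref
      _ = D - 2 * x₁ := abs_of_nonneg hD₁
  rw [abs_of_nonneg h₁l, abs_of_nonneg h₀l]
  linarith

/-- case 1 of Lemma 3: two consecutive transfers with the
difference remaining nonnegative satisfy |x₁| ≤ |x₀|. -/
theorem stmt5 (D x₀ x₁ : ℝ) (hD : 0 < D)
    (h₀l : 0 ≤ x₀) (h₀u : x₀ ≤ D)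
    (h₁l : 0 ≤ x₁) (h₁u : x₁ ≤ D - 2 * x₀)
    (hnn₀ : 0 ≤ D - 2 * x₀) (hnn₁ : 0 ≤ D - 2 * x₀ - 2 * x₁)
    (hpref : |D - 2 * x₀| ≤ |D - 2 * x₁|) :
    |x₁| ≤ |x₀| :=
  stmt5_general D x₀ x₁ h₀l h₁l hnn₁ hpref
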